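/- For every integer r ≥ 2 there exists a constant C_r > 0 such that for all δ > 0: |∑_{j ≥ 1} j^{r - 5/2} e^{-δ j} − (2r−5)!! · √(2π) / (2δ)^{r−3/2}| ≤ C_r · (1 + δ^{-(r-5/2)}), where by convention the double factorial x!! = ∏_{0 ≤ j < ⌈x/2⌉}(x − 2j) equals 1 when x ≤ 0. -/

import Mathlib

/-!
Write `f x = x ^ a * exp (-δ * x)` with `a = r - 5/2 > -1`. On each unit interval `f` differs from
its mean by at most its variation there, so `∑_{j ≥ 1} f j` is within `∫_1^∞ |f'|` of `∫_1^∞ f`,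
which in turn is within `∫_0^1 f ≤ 1/(a+1)` of the Gamma integral
`∫_0^∞ f = Γ(a+1) δ^{-(a+1)} = (2r-5)!! √(2π) / (2δ)^{r-3/2}`.
Integrating `f'` over `(1, ∞)` gives `a ∫_1^∞ x^{a-1} e^{-δx} = δ ∫_1^∞ f - e^{-δ}`, so
`∫_1^∞ |f'| ≤ 1 + 2δ ∫_0^∞ f = 1 + 2 Γ(a+1) δ^{-a}`.
-/

/-- The double factorial `(2r-5)!! = ∏_{0 ≤ j < ⌈(2r-5)/2⌉} ((2r-5) - 2j)`, with the
convention that it equals `1` when `2r-5 ≤ 0`.  For `r ≥ 3` we have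
`⌈(2r-5)/2⌉ = r - 2`, and for `r = 2` the product is empty. -/
noncomputable def doubleFac (r : ℕ) : ℝ :=
  ∏ j ∈ Finset.range (r - 2), ((2 * r : ℝ) - 5 - 2 * j)

open MeasureTheory Real Set Filter Topology
open scoped Nat

section SumIntegral

variable {f f' : ℝ → ℝ}

theorem abs_sub_integral_le_integral_abs_deriv {b : ℝ}
    (hf : ∀ x ∈ Icc b (b + 1), HasDerivAt f (f' x) x)
    (hf' : IntervalIntegrable f' volume b (b + 1)) :
    |f b - ∫ x in b..b + 1, f x| ≤ ∫ x in b..b + 1, |f' x| := by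
  have hb : b ≤ b + 1 := by linarith
  have hfi : IntervalIntegrable f volume b (b + 1) :=
    (HasDerivAt.continuousOn fun x hx => hf x (by rwa [uIcc_of_le hb] at hx)).intervalIntegrable
  have hosc : ∀ x ∈ uIoc b (b + 1), ‖f b - f x‖ ≤ ∫ y in b..b + 1, |f' y| := by
    intro x hx
    rw [uIoc_of_le hb] at hx
    have hsub : uIcc b x ⊆ Icc b (b + 1) := by
      rw [uIcc_of_le hx.1.le]; exact Icc_subset_Icc_right hx.2
    have hf'x : IntervalIntegrable f' volume b x := hf'.mono_set (by
      rw [uIcc_of_le hx.1.le, uIcc_of_le hb]; exact Icc_subset_Icc_right hx.2)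
    calc ‖f b - f x‖ = |∫ y in b..x, f' y| := by
          rw [intervalIntegral.integral_eq_sub_of_hasDerivAt (fun y hy => hf y (hsub hy)) hf'x,
            Real.norm_eq_abs, abs_sub_comm]
      _ ≤ ∫ y in b..x, |f' y| := intervalIntegral.abs_integral_le_integral_abs hx.1.le
      _ ≤ ∫ y in b..b + 1, |f' y| :=
          intervalIntegral.integral_mono_interval le_rfl hx.1.le hx.2
            (Eventually.of_forall fun y => abs_nonneg _) hf'.abs
  have := intervalIntegral.norm_integral_le_of_norm_le_const hosc
  rw [intervalIntegral.integral_sub intervalIntegrable_const hfi, intervalIntegral.integral_const,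
    add_sub_cancel_left, one_smul, abs_one, mul_one] at this
  simpa using this

theorem intervalIntegrable_of_integrableOn_Ioi {g : ℝ → ℝ} {a b c : ℝ}
    (hg : IntegrableOn g (Ioi a)) (hab : a ≤ b) (hbc : b ≤ c) : IntervalIntegrable g volume b c :=
  (intervalIntegrable_iff_integrableOn_Ioc_of_le hbc).mpr
    (hg.mono_set fun _ hx => lt_of_le_of_lt hab hx.1)

theorem abs_tsum_sub_integral_Ioi_one_le (hf : ∀ x ∈ Ici 1, HasDerivAt f (f' x) x)
    (hfi : IntegrableOn f (Ioi 1)) (hf'i : IntegrableOn f' (Ioi 1))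
    (hs : Summable fun n : ℕ => f (n + 1)) :
    |∑' n : ℕ, f (n + 1) - ∫ x in Ioi 1, f x| ≤ ∫ x in Ioi 1, |f' x| := by
  have hk : ∀ k : ℕ, (1 : ℝ) ≤ k + 1 := fun k => by simp
  have hsum_int : ∀ {g : ℝ → ℝ}, IntegrableOn g (Ioi 1) → ∀ N : ℕ,
      ∑ k ∈ Finset.range N, ∫ x in (k : ℝ) + 1..(k : ℝ) + 1 + 1, g x =
        ∫ x in (1 : ℝ)..(N : ℝ) + 1, g x := fun hg N => by
    simpa using intervalIntegral.sum_integral_adjacent_intervals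
      (a := fun k : ℕ => (k : ℝ) + 1) fun k _ =>
        intervalIntegrable_of_integrableOn_Ioi hg (hk k) (by push_cast; linarith)
  have hpartial : ∀ N : ℕ,
      |∑ k ∈ Finset.range N, f (k + 1) - ∫ x in (1 : ℝ)..(N : ℝ) + 1, f x|
        ≤ ∫ x in Ioi 1, |f' x| := by
    intro N
    rw [← hsum_int hfi, ← Finset.sum_sub_distrib]
    calc _ ≤ ∑ k ∈ Finset.range N, |f (k + 1) - ∫ x in (k : ℝ) + 1..(k : ℝ) + 1 + 1, f x| :=
          Finset.abs_sum_le_sum_abs _ _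
      _ ≤ ∑ k ∈ Finset.range N, ∫ x in (k : ℝ) + 1..(k : ℝ) + 1 + 1, |f' x| :=
          Finset.sum_le_sum fun k _ => abs_sub_integral_le_integral_abs_deriv
            (fun x hx => hf x (le_trans (hk k) hx.1))
            (intervalIntegrable_of_integrableOn_Ioi hf'i (hk k) (by linarith))
      _ = ∫ x in (1 : ℝ)..(N : ℝ) + 1, |f' x| := hsum_int hf'i.abs N
      _ ≤ ∫ x in Ioi 1, |f' x| := by
          rw [intervalIntegral.integral_of_le (hk N)]
          exact setIntegral_mono_set hf'i.abs (Eventually.of_forall fun _ => abs_nonneg _)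
            Ioc_subset_Ioi_self.eventuallyLE
  refine le_of_tendsto ((hs.hasSum.tendsto_sum_nat.sub ?_).abs) (Eventually.of_forall hpartial)
  exact intervalIntegral_tendsto_integral_Ioi 1 hfi
    (tendsto_atTop_add_const_right _ 1 tendsto_natCast_atTop_atTop)

end SumIntegral

section RpowExp

variable {a δ : ℝ}

theorem hasDerivAt_rpow_mul_exp_neg_mul {x : ℝ} (hx : 0 < x) :
    HasDerivAt (fun x => x ^ a * exp (-δ * x))
      (a * (x ^ (a - 1) * exp (-δ * x)) - δ * (x ^ a * exp (-δ * x))) x :=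
  ((hasDerivAt_rpow_const (p := a) (Or.inl hx.ne')).mul
    ((hasDerivAt_id' x).const_mul (-δ)).exp).congr_deriv (by ring)

theorem integral_Ioi_zero_rpow_mul_exp_neg_mul (ha : -1 < a) (hδ : 0 < δ) :
    ∫ x in Ioi 0, x ^ a * exp (-δ * x) = Gamma (a + 1) * δ ^ (-(a + 1)) := by
  have := integral_rpow_mul_exp_neg_mul_Ioi (a := a + 1) (by linarith) hδ
  rw [add_sub_cancel_right, one_div, inv_rpow hδ.le, ← rpow_neg hδ.le] at this
  simpa [neg_mul, mul_comm] using this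

theorem integrableOn_Ioi_zero_rpow_mul_exp_neg_mul (ha : -1 < a) (hδ : 0 < δ) :
    IntegrableOn (fun x => x ^ a * exp (-δ * x)) (Ioi 0) := by
  simpa using integrableOn_rpow_mul_exp_neg_mul_rpow ha zero_lt_one hδ

theorem integrableOn_Ioi_one_rpow_sub_one_mul_exp_neg_mul (ha : -1 < a) (hδ : 0 < δ) :
    IntegrableOn (fun x => x ^ (a - 1) * exp (-δ * x)) (Ioi 1) := by
  refine ((integrableOn_Ioi_zero_rpow_mul_exp_neg_mul ha hδ).mono_set
    (Ioi_subset_Ioi zero_le_one)).mono' ?_ ?_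
  · exact ((continuousOn_id.rpow_const fun x hx => Or.inl (zero_lt_one.trans hx).ne').mul
      (continuous_exp.comp (continuous_const.mul continuous_id)).continuousOn).aestronglyMeasurable
      measurableSet_Ioi
  · filter_upwards [ae_restrict_mem measurableSet_Ioi] with x (hx : 1 < x)
    rw [norm_of_nonneg (by positivity)]
    exact mul_le_mul_of_nonneg_right (rpow_le_rpow_of_exponent_le hx.le (by linarith))
      (exp_pos _).le

theorem mul_integral_Ioi_one_rpow_sub_one_mul_exp_neg_mul (ha : -1 < a) (hδ : 0 < δ) :
    a * ∫ x in Ioi 1, x ^ (a - 1) * exp (-δ * x) =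
      δ * (∫ x in Ioi 1, x ^ a * exp (-δ * x)) - exp (-δ) := by
  have hA := (integrableOn_Ioi_one_rpow_sub_one_mul_exp_neg_mul ha hδ).const_mul a
  have hB := ((integrableOn_Ioi_zero_rpow_mul_exp_neg_mul ha hδ).mono_set
    (Ioi_subset_Ioi zero_le_one)).const_mul δ
  have := integral_Ioi_of_hasDerivAt_of_tendsto'
    (fun x (hx : 1 ≤ x) => hasDerivAt_rpow_mul_exp_neg_mul (a := a) (δ := δ) (by linarith))
    (hA.sub hB) (tendsto_rpow_mul_exp_neg_mul_atTop_nhds_zero a δ hδ)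
  rw [integral_sub hA hB, integral_const_mul, integral_const_mul] at this
  simp only [one_rpow, mul_one, one_mul, zero_sub] at this
  linarith

theorem integral_Ioi_one_abs_deriv_rpow_mul_exp_neg_mul_le (ha : -1 < a) (hδ : 0 < δ) :
    ∫ x in Ioi 1, |a * (x ^ (a - 1) * exp (-δ * x)) - δ * (x ^ a * exp (-δ * x))|
      ≤ 1 + 2 * Gamma (a + 1) * δ ^ (-a) := by
  set A := ∫ x in Ioi 1, x ^ (a - 1) * exp (-δ * x)
  set B := ∫ x in Ioi 1, x ^ a * exp (-δ * x)
  have hAi := integrableOn_Ioi_one_rpow_sub_one_mul_exp_neg_mul ha hδ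
  have hBi := (integrableOn_Ioi_zero_rpow_mul_exp_neg_mul ha hδ).mono_set
    (Ioi_subset_Ioi zero_le_one)
  have hA : 0 ≤ A := setIntegral_nonneg measurableSet_Ioi fun x (hx : 1 < x) => by
    have := zero_lt_one.trans hx; positivity
  have hB : δ * B ≤ Gamma (a + 1) * δ ^ (-a) := by
    calc δ * B ≤ δ * ∫ x in Ioi 0, x ^ a * exp (-δ * x) := by
          gcongr
          exact setIntegral_mono_set (integrableOn_Ioi_zero_rpow_mul_exp_neg_mul ha hδ)
            ((ae_restrict_mem measurableSet_Ioi).mono fun x (hx : 0 < x) => by positivity)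
            (Ioi_subset_Ioi zero_le_one).eventuallyLE
      _ = Gamma (a + 1) * δ ^ (-a) := by
          rw [integral_Ioi_zero_rpow_mul_exp_neg_mul ha hδ, show -a = 1 + -(a + 1) by ring,
            rpow_add hδ, rpow_one]
          ring
  have htriangle : ∫ x in Ioi 1, |a * (x ^ (a - 1) * exp (-δ * x)) - δ * (x ^ a * exp (-δ * x))|
      ≤ |a| * A + δ * B := by
    rw [← integral_const_mul, ← integral_const_mul,
      ← integral_add (hAi.const_mul _) (hBi.const_mul _)]
    refine setIntegral_mono_on ((hAi.const_mul a).sub (hBi.const_mul δ)).abs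
      ((hAi.const_mul _).add (hBi.const_mul _)) measurableSet_Ioi fun x (hx : 1 < x) => ?_
    have := zero_lt_one.trans hx
    refine (abs_sub _ _).trans_eq ?_
    rw [abs_mul a, abs_mul δ, abs_of_pos hδ,
      abs_of_nonneg (by positivity : 0 ≤ x ^ (a - 1) * exp (-δ * x)),
      abs_of_nonneg (by positivity : 0 ≤ x ^ a * exp (-δ * x))]
  have hIBP : |a| * A ≤ δ * B + 1 := by
    rw [← abs_of_nonneg hA, ← abs_mul, mul_integral_Ioi_one_rpow_sub_one_mul_exp_neg_mul ha hδ]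
    refine (abs_sub _ _).trans ?_
    have hB : 0 ≤ B := setIntegral_nonneg measurableSet_Ioi fun x (hx : 1 < x) => by
      have := zero_lt_one.trans hx; positivity
    rw [abs_of_nonneg (mul_nonneg hδ.le hB), abs_of_pos (exp_pos _)]
    gcongr
    exact exp_le_one_iff.mpr (by linarith)
  linarith

theorem integral_Ioc_zero_one_rpow_mul_exp_neg_mul_le (ha : -1 < a) (hδ : 0 < δ) :
    ∫ x in Ioc 0 1, x ^ a * exp (-δ * x) ≤ 1 / (a + 1) := by
  have hrpow : IntervalIntegrable (fun x : ℝ => x ^ a) volume 0 1 :=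
    intervalIntegral.intervalIntegrable_rpow' ha
  rw [intervalIntegrable_iff_integrableOn_Ioc_of_le zero_le_one] at hrpow
  calc ∫ x in Ioc 0 1, x ^ a * exp (-δ * x) ≤ ∫ x in Ioc 0 1, x ^ a := by
        refine setIntegral_mono_on ?_ hrpow measurableSet_Ioc fun x hx => ?_
        · exact ((integrableOn_Ioi_zero_rpow_mul_exp_neg_mul ha hδ).mono_set Ioc_subset_Ioi_self)
        · have := hx.1
          exact mul_le_of_le_one_right (by positivity) (exp_le_one_iff.mpr (by nlinarith))
    _ = 1 / (a + 1) := by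
        rw [← intervalIntegral.integral_of_le zero_le_one, integral_rpow (Or.inl ha), one_rpow,
          zero_rpow (by linarith)]
        ring

theorem summable_rpow_mul_exp_neg_mul_nat_add_one (hδ : 0 < δ) :
    Summable fun n : ℕ => ((n : ℝ) + 1) ^ a * exp (-δ * ((n : ℝ) + 1)) := by
  have := (summable_nat_add_iff 1).mpr (summable_pow_mul_exp_neg_nat_mul ⌈a⌉₊ hδ)
  refine this.of_nonneg_of_le (fun n => by positivity) fun n => ?_
  push_cast
  gcongr
  rw [← rpow_natCast]
  exact rpow_le_rpow_of_exponent_le (by simp) (Nat.le_ceil a)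

theorem abs_tsum_rpow_mul_exp_neg_mul_sub_Gamma_le (ha : -1 < a) (hδ : 0 < δ) :
    |∑' n : ℕ, ((n : ℝ) + 1) ^ a * exp (-δ * ((n : ℝ) + 1)) - Gamma (a + 1) * δ ^ (-(a + 1))|
      ≤ 1 / (a + 1) + 1 + 2 * Gamma (a + 1) * δ ^ (-a) := by
  have hint := integrableOn_Ioi_zero_rpow_mul_exp_neg_mul ha hδ
  have hsplit : Gamma (a + 1) * δ ^ (-(a + 1)) = (∫ x in Ioc 0 1, x ^ a * exp (-δ * x)) +
      ∫ x in Ioi 1, x ^ a * exp (-δ * x) := by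
    rw [← integral_Ioi_zero_rpow_mul_exp_neg_mul ha hδ, ← Ioc_union_Ioi_eq_Ioi zero_le_one,
      setIntegral_union (Ioc_disjoint_Ioi le_rfl) measurableSet_Ioi
        (hint.mono_set Ioc_subset_Ioi_self) (hint.mono_set (Ioi_subset_Ioi zero_le_one))]
  have hIoc_nonneg : 0 ≤ ∫ x in Ioc 0 1, x ^ a * exp (-δ * x) :=
    setIntegral_nonneg measurableSet_Ioc fun x hx => by have := hx.1; positivity
  have hIoi := abs_tsum_sub_integral_Ioi_one_le (f := fun x => x ^ a * exp (-δ * x))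
    (fun x (hx : 1 ≤ x) => hasDerivAt_rpow_mul_exp_neg_mul (by linarith))
    (hint.mono_set (Ioi_subset_Ioi zero_le_one))
    (((integrableOn_Ioi_one_rpow_sub_one_mul_exp_neg_mul ha hδ).const_mul a).sub
      ((hint.mono_set (Ioi_subset_Ioi zero_le_one)).const_mul δ))
    (summable_rpow_mul_exp_neg_mul_nat_add_one hδ)
  have := integral_Ioi_one_abs_deriv_rpow_mul_exp_neg_mul_le ha hδ
  have := integral_Ioc_zero_one_rpow_mul_exp_neg_mul_le ha hδ
  rw [hsplit, abs_le]
  rw [abs_le] at hIoi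
  constructor <;> linarith

end RpowExp

theorem doubleFac_add_two (k : ℕ) : doubleFac (k + 2) = ((2 * k - 1 : ℕ)‼ : ℝ) := by
  induction k with
  | zero => simp [doubleFac]
  | succ k ih =>
    rw [doubleFac, show k + 1 + 2 - 2 = k + 1 by omega, Finset.prod_range_succ',
      show 2 * (k + 1) - 1 = 2 * k + 1 by omega, Nat.doubleFactorial_add_one, Nat.cast_mul, ← ih,
      doubleFac, show k + 2 - 2 = k by omega]
    push_cast
    rw [mul_comm]
    congr 1
    · ring
    · exact Finset.prod_congr rfl fun j _ => by ring

theorem doubleFac_mul_sqrt_two_pi_div_rpow {r : ℕ} (hr : 2 ≤ r) {δ : ℝ} (hδ : 0 < δ) :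
    doubleFac r * √(2 * π) / (2 * δ) ^ ((r : ℝ) - 3 / 2) =
      Gamma ((r : ℝ) - 3 / 2) * δ ^ (-((r : ℝ) - 3 / 2)) := by
  obtain ⟨k, rfl⟩ := Nat.exists_eq_add_of_le' hr
  have hexp : ((k + 2 : ℕ) : ℝ) - 3 / 2 = k + 1 / 2 := by push_cast; ring
  rw [hexp, Gamma_nat_add_half, doubleFac_add_two, mul_rpow zero_le_two hδ.le, rpow_neg hδ.le,
    rpow_add zero_lt_two, rpow_natCast, ← sqrt_eq_rpow, sqrt_mul zero_le_two]
  have : 0 < √2 := by positivity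
  field_simp

theorem stmt_2 (r : ℕ) (hr : 2 ≤ r) :
    ∃ C : ℝ, 0 < C ∧ ∀ δ : ℝ, 0 < δ →
      |(∑' j : ℕ, if 1 ≤ j then (j : ℝ) ^ ((r : ℝ) - 5 / 2) * Real.exp (-δ * j) else 0)
          - doubleFac r * Real.sqrt (2 * Real.pi) / (2 * δ) ^ ((r : ℝ) - 3 / 2)|
        ≤ C * (1 + δ ^ (-((r : ℝ) - 5 / 2))) := by
  set a : ℝ := (r : ℝ) - 5 / 2 with ha_def
  have ha : -1 < a := by
    have : (2 : ℝ) ≤ r := by exact_mod_cast hr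
    linarith
  have hinv : 0 < 1 / (a + 1) := one_div_pos.mpr (by linarith)
  have hGamma : 0 < Gamma (a + 1) := Gamma_pos_of_pos (by linarith)
  refine ⟨1 / (a + 1) + 1 + 2 * Gamma (a + 1), by linarith, fun δ hδ => ?_⟩
  have hsum : (∑' j : ℕ, if 1 ≤ j then (j : ℝ) ^ a * exp (-δ * j) else 0) =
      ∑' n : ℕ, ((n : ℝ) + 1) ^ a * exp (-δ * ((n : ℝ) + 1)) := by
    rw [tsum_eq_zero_add' (by simpa using summable_rpow_mul_exp_neg_mul_nat_add_one hδ)]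
    simp
  rw [hsum, doubleFac_mul_sqrt_two_pi_div_rpow hr hδ, show (r : ℝ) - 3 / 2 = a + 1 by ring]
  calc _ ≤ 1 / (a + 1) + 1 + 2 * Gamma (a + 1) * δ ^ (-a) :=
        abs_tsum_rpow_mul_exp_neg_mul_sub_Gamma_le ha hδ
    _ ≤ _ := by nlinarith [rpow_pos_of_pos hδ (-a)]
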